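/- arXiv:1510.03705 — 3 statements merged into one kernel-verified Lean document; each statement's English description precedes it below -/
import Mathlib

section
/- For a TU game with indirect function π, a pre-imputation x satisfies h(x) = 0, where h(x) = sum over pairs i<j of (π(x^{i,j,δ}) - π(x^{j,i,δ}))^2 + (sum_k x_k - v(N))^2 for sufficiently large δ, if and only if x belongs to the pre-kernel of the game. Hence the set of global minima of h over the pre-imputation set equals the pre-kernel. -/
open scoped BigOperators

noncomputable section

/-- Excess of coalition `S` at payoff vector `x` in the game `v`. -/
def excess {n : ℕ} (v : Finset (Fin n) → ℝ) (S : Finset (Fin n)) (x : Fin n → ℝ) : ℝ :=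
  v S - ∑ k ∈ S, x k

/-- The indirect function `π(x) = max_{S ⊆ N} (v(S) - x(S))`. -/
def indirect {n : ℕ} (v : Finset (Fin n) → ℝ) (x : Fin n → ℝ) : ℝ :=
  (Finset.univ : Finset (Finset (Fin n))).sup' ⟨∅, Finset.mem_univ ∅⟩ (fun S => excess v S x)

/-- The payoff vector obtained from `x` by transferring `δ` from player `i` to player `j`. -/
def transfer {n : ℕ} (x : Fin n → ℝ) (i j : Fin n) (δ : ℝ) : Fin n → ℝ :=
  fun k => if k = i then x i - δ else if k = j then x j + δ else x k

/-- Maximum surplus of player `i` over player `j` at `x`. -/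
def maxSurplus {n : ℕ} (v : Finset (Fin n) → ℝ) (i j : Fin n) (x : Fin n → ℝ) : ℝ :=
  sSup {e | ∃ S : Finset (Fin n), i ∈ S ∧ j ∉ S ∧ e = excess v S x}

/-- The critical bound `δ₁(x,v)`. -/
def delta1 {n : ℕ} (x : Fin n → ℝ) (v : Finset (Fin n) → ℝ) : ℝ :=
  sSup {e | ∃ (k : Fin n) (S : Finset (Fin n)), k ∉ S ∧ e = |v (insert k S) - v S - x k|}

/-- The objective function `h`. -/
def hFun {n : ℕ} (v : Finset (Fin n) → ℝ) (δ : ℝ) (x : Fin n → ℝ) : ℝ :=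
  (∑ p ∈ Finset.univ.filter (fun p : Fin n × Fin n => p.1 < p.2),
    (indirect v (transfer x p.1 p.2 δ) - indirect v (transfer x p.2 p.1 δ)) ^ 2)
  + (∑ k, x k - v Finset.univ) ^ 2

/-- The pre-kernel of the game `v`. -/
def preKernel {n : ℕ} (v : Finset (Fin n) → ℝ) : Set (Fin n → ℝ) :=
  {x | (∑ k, x k = v Finset.univ) ∧
    ∀ i j : Fin n, i ≠ j → maxSurplus v i j x = maxSurplus v j i x}

/-!
For `δ ≥ δ₁(x,v)` one has `π(x^{i,j,δ}) = δ + s_ij(x,v)` (Meseguer-Artola): a coalition containing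
`i` but not `j` gains exactly `δ` from the transfer, and since adding or removing a single player
changes an excess by at most `δ₁ ≤ δ`, no other coalition can do better. Hence on the
pre-imputation set `h` is the sum of the squares `(s_ij - s_ji)²` over `i < j`, which vanishes
exactly on the pre-kernel.
-/

section

variable {n : ℕ} (v : Finset (Fin n) → ℝ) (x : Fin n → ℝ)

lemma finite_excess_separating (i j : Fin n) :
    {e | ∃ S : Finset (Fin n), i ∈ S ∧ j ∉ S ∧ e = excess v S x}.Finite :=
  (Set.finite_range fun S => excess v S x).subset <| by rintro e ⟨S, -, -, rfl⟩; exact ⟨S, rfl⟩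

lemma excess_le_maxSurplus {i j : Fin n} {S : Finset (Fin n)} (hi : i ∈ S) (hj : j ∉ S) :
    excess v S x ≤ maxSurplus v i j x :=
  le_csSup (finite_excess_separating v x i j).bddAbove ⟨S, hi, hj, rfl⟩

lemma exists_excess_eq_maxSurplus {i j : Fin n} (h : i ≠ j) :
    ∃ S : Finset (Fin n), i ∈ S ∧ j ∉ S ∧ maxSurplus v i j x = excess v S x :=
  Set.Nonempty.csSup_mem (s := {e | ∃ S : Finset (Fin n), i ∈ S ∧ j ∉ S ∧ e = excess v S x})
    ⟨_, {i}, Finset.mem_singleton_self i, by simpa using h.symm, rfl⟩ (finite_excess_separating v x i j)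

lemma abs_marginal_le_delta1 {k : Fin n} {S : Finset (Fin n)} (hk : k ∉ S) :
    |v (insert k S) - v S - x k| ≤ delta1 x v := by
  refine le_csSup (Set.Finite.bddAbove ?_) ⟨k, S, hk, rfl⟩
  refine (Set.finite_range fun p : Fin n × Finset (Fin n) =>
    |v (insert p.1 p.2) - v p.2 - x p.1|).subset ?_
  rintro e ⟨k, S, -, rfl⟩
  exact ⟨(k, S), rfl⟩

lemma abs_excess_insert_sub_le_delta1 {k : Fin n} {S : Finset (Fin n)} (hk : k ∉ S) :
    |excess v (insert k S) x - excess v S x| ≤ delta1 x v := by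
  have hmarginal : excess v (insert k S) x - excess v S x = v (insert k S) - v S - x k := by
    simp only [excess, Finset.sum_insert hk]
    ring
  exact hmarginal ▸ abs_marginal_le_delta1 v x hk

variable {v x} {δ : ℝ}

lemma excess_sub_le_excess_erase (hδ : delta1 x v ≤ δ) (k : Fin n) (S : Finset (Fin n)) :
    excess v S x - (if k ∈ S then δ else 0) ≤ excess v (S.erase k) x := by
  split_ifs with hk
  · have := abs_excess_insert_sub_le_delta1 v x (Finset.notMem_erase k S)
    rw [Finset.insert_erase hk] at this
    linarith [le_abs_self (excess v S x - excess v (S.erase k) x)]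
  · simp [Finset.erase_eq_of_notMem hk]

lemma excess_add_le_excess_insert (hδ : delta1 x v ≤ δ) (k : Fin n) (S : Finset (Fin n)) :
    excess v S x + (if k ∈ S then δ else 0) ≤ excess v (insert k S) x + δ := by
  split_ifs with hk
  · simp [Finset.insert_eq_of_mem hk]
  · linarith [neg_abs_le (excess v (insert k S) x - excess v S x),
      abs_excess_insert_sub_le_delta1 v x hk]

lemma transfer_eq {i j : Fin n} (h : i ≠ j) :
    transfer x i j δ = x - Pi.single i δ + Pi.single j δ := by
  ext k
  by_cases hki : k = i <;> by_cases hkj : k = j <;> simp_all [transfer]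

lemma excess_transfer {i j : Fin n} (h : i ≠ j) (S : Finset (Fin n)) :
    excess v S (transfer x i j δ)
      = excess v S x + (if i ∈ S then δ else 0) - (if j ∈ S then δ else 0) := by
  simp only [excess, transfer_eq h, Pi.add_apply, Pi.sub_apply, Finset.sum_add_distrib,
    Finset.sum_sub_distrib, Finset.sum_pi_single']
  ring

lemma excess_transfer_le (hδ : delta1 x v ≤ δ) {i j : Fin n} (h : i ≠ j) (S : Finset (Fin n)) :
    excess v S (transfer x i j δ) ≤ δ + maxSurplus v i j x := by
  have hi : i ∈ S.erase j ↔ i ∈ S := by simp [h]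
  calc excess v S (transfer x i j δ)
      = (excess v S x - (if j ∈ S then δ else 0)) + (if i ∈ S then δ else 0) := by
        rw [excess_transfer h]; ring
    _ ≤ excess v (S.erase j) x + (if i ∈ S.erase j then δ else 0) := by
        simp only [hi]; gcongr; exact excess_sub_le_excess_erase hδ j S
    _ ≤ excess v (insert i (S.erase j)) x + δ := excess_add_le_excess_insert hδ i _
    _ ≤ δ + maxSurplus v i j x := by
        rw [add_comm]
        gcongr
        exact excess_le_maxSurplus v x (Finset.mem_insert_self i _) (by simp [h.symm])

theorem indirect_transfer (hδ : delta1 x v ≤ δ) {i j : Fin n} (h : i ≠ j) :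
    indirect v (transfer x i j δ) = δ + maxSurplus v i j x := by
  refine le_antisymm (Finset.sup'_le _ _ fun S _ => excess_transfer_le hδ h S) ?_
  obtain ⟨S, hi, hj, hS⟩ := exists_excess_eq_maxSurplus v x h
  calc δ + maxSurplus v i j x = excess v S (transfer x i j δ) := by
        rw [excess_transfer h, hS, if_pos hi, if_neg hj]; ring
    _ ≤ indirect v (transfer x i j δ) :=
        Finset.le_sup' (fun S => excess v S (transfer x i j δ)) (Finset.mem_univ S)

theorem hFun_eq_zero_iff (hx : ∑ k, x k = v Finset.univ) (hδ : delta1 x v ≤ δ) :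
    hFun v δ x = 0 ↔ x ∈ preKernel v := by
  have hdiff : ∀ i j : Fin n, i ≠ j →
      indirect v (transfer x i j δ) - indirect v (transfer x j i δ)
        = maxSurplus v i j x - maxSurplus v j i x := fun i j h => by
    rw [indirect_transfer hδ h, indirect_transfer hδ h.symm]; ring
  rw [hFun, hx, sub_self, zero_pow two_ne_zero, add_zero,
    Finset.sum_eq_zero_iff_of_nonneg fun _ _ => sq_nonneg _]
  simp only [Finset.mem_filter, Finset.mem_univ, true_and, sq_eq_zero_iff, Prod.forall]
  constructor
  · refine fun hzero => ⟨hx, fun i j hij => ?_⟩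
    rcases lt_or_gt_of_ne hij with hlt | hgt
    · linarith [hzero i j hlt, hdiff i j hij]
    · linarith [hzero j i hgt, hdiff j i hij.symm]
  · rintro ⟨-, hker⟩ i j hlt
    rw [hdiff i j hlt.ne, hker i j hlt.ne, sub_self]

end

theorem stmt1_general {n : ℕ} (v : Finset (Fin n) → ℝ)
    (x : Fin n → ℝ) (hx : ∑ k, x k = v Finset.univ)
    (δ : ℝ) (hδ : delta1 x v ≤ δ) :
    (hFun v δ x = 0 ↔ x ∈ preKernel v) ∧
    {y : Fin n → ℝ | (∑ k, y k = v Finset.univ) ∧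
        ∀ δ' : ℝ, delta1 y v ≤ δ' → hFun v δ' y = 0} = preKernel v := by
  refine ⟨hFun_eq_zero_iff hx hδ, Set.ext fun y => ⟨?_, ?_⟩⟩
  · rintro ⟨hy, hzero⟩
    exact (hFun_eq_zero_iff hy le_rfl).1 (hzero _ le_rfl)
  · intro hy
    exact ⟨hy.1, fun δ' hδ' => (hFun_eq_zero_iff hy.1 hδ').2 hy⟩

/-- A pre-imputation `x` satisfies `h(x) = 0` (for `δ ≥ δ₁(x,v)`) iff `x` is in the
pre-kernel; hence the set of global minima of `h` over the pre-imputation set is the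
pre-kernel. -/
theorem stmt1 {n : ℕ} (hn : 2 ≤ n) (v : Finset (Fin n) → ℝ) (hv0 : v ∅ = 0)
    (x : Fin n → ℝ) (hx : ∑ k, x k = v Finset.univ)
    (δ : ℝ) (hδ : delta1 x v ≤ δ) :
    (hFun v δ x = 0 ↔ x ∈ preKernel v) ∧
    {y : Fin n → ℝ | (∑ k, y k = v Finset.univ) ∧
        ∀ δ' : ℝ, delta1 y v ≤ δ' → hFun v δ' y = 0} = preKernel v :=
  stmt1_general v x hx δ hδ
end
end

section
/- (Kohlberg's criterion, stated form) Let (N,v) be a TU game and x a pre-imputation. Then x is the pre-nucleolus of (N,v) if and only if for every real ψ, whenever the set D^v(ψ,x) = {S ⊆ N, S ≠ ∅, S ≠ N : e^v(S,x) ≥ ψ} is nonempty, it is a balanced collection over N. -/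
open scoped BigOperators

noncomputable section

/-- The vector `θ(x)` of all `2ⁿ` excesses arranged in non-increasing order. -/
def theta {n : ℕ} (v : Finset (Fin n) → ℝ) (x : Fin n → ℝ) : List ℝ :=
  ((Multiset.map (fun S => excess v S x) (Finset.univ : Finset (Finset (Fin n))).val).sort
    (· ≤ ·)).reverse

/-- Weak lexicographic order on lists of reals. -/
def lexLe (l₁ l₂ : List ℝ) : Prop := l₁ = l₂ ∨ List.Lex (· < ·) l₁ l₂

/-- `x` is the pre-nucleolus of `v`: an efficient vector lexicographically minimizing the
non-increasingly ordered vector of excesses among all pre-imputations. -/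
def IsPrenucleolus {n : ℕ} (v : Finset (Fin n) → ℝ) (x : Fin n → ℝ) : Prop :=
  (∑ k, x k = v Finset.univ) ∧
    ∀ y : Fin n → ℝ, (∑ k, y k = v Finset.univ) → lexLe (theta v x) (theta v y)

/-- The Kohlberg level set `D^v(ψ,x)` of proper nonempty coalitions with excess `≥ ψ`. -/
def Dset {n : ℕ} (v : Finset (Fin n) → ℝ) (ψ : ℝ) (x : Fin n → ℝ) :
    Finset (Finset (Fin n)) :=
  Finset.univ.filter (fun S => S.Nonempty ∧ S ≠ Finset.univ ∧ ψ ≤ excess v S x)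

/-- Characteristic (indicator) vector of a coalition. -/
def indicat {n : ℕ} (S : Finset (Fin n)) : Fin n → ℝ := fun k => if k ∈ S then 1 else 0

/-- A collection of coalitions is balanced if some positive weights make the indicator
vectors sum to the all-ones vector. -/
def IsBalanced {n : ℕ} (B : Finset (Finset (Fin n))) : Prop :=
  ∃ w : Finset (Fin n) → ℝ, (∀ S ∈ B, 0 < w S) ∧
    (∑ S ∈ B, w S • indicat S) = fun _ => (1 : ℝ)

/-!
Write a second pre-imputation as `x + d` with `∑ d = 0`, so that every excess moves by `-d(S)`.
By Stiemke's lemma (separate the standard simplex from a subspace), a collection with a nonempty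
member is balanced as soon as no zero-sum `d` is `≥ 0` on all its coalitions and `> 0` on one.
If some `D(ψ, x)` were not balanced, a small step along such a `d` lowers an excess `≥ ψ`, raises
none of them and keeps the excesses below `ψ` below it, so `θ` decreases lexicographically.
Conversely, if every `D(ψ, x)` is balanced, let `S` have maximal excess among the proper
coalitions with `d(S) ≠ 0`; balancedness of `D(e(S, x), x)` forces a coalition at that level with
`d < 0`, whose excess rises while all higher excesses stay put, so `θ` increases.
-/

open Matrix Finset Filter Topology

theorem Submodule.exists_pos_dotProduct_eq_zero {ι : Type*} [Fintype ι]
    (L : Submodule ℝ (ι → ℝ)) (hL : ∀ z ∈ L, 0 ≤ z → z = 0) :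
    ∃ w : ι → ℝ, (∀ i, 0 < w i) ∧ ∀ z ∈ L, w ⬝ᵥ z = 0 := by
  classical
  have hdisj : Disjoint (stdSimplex ℝ ι) (L : Set (ι → ℝ)) := by
    refine Set.disjoint_left.2 fun z hzΔ hzL => ?_
    have hsum := hzΔ.2
    rw [hL z hzL hzΔ.1] at hsum
    simp at hsum
  obtain ⟨f, u, v, hfu, huv, hvf⟩ := geometric_hahn_banach_compact_closed (convex_stdSimplex ℝ ι)
    (isCompact_stdSimplex ℝ ι) L.convex L.closed_of_finiteDimensional hdisj
  have hv : v < 0 := by simpa using hvf 0 L.zero_mem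
  have hf : ∀ z ∈ L, f z = 0 := by
    intro z hz
    by_contra hfz
    have := hvf (((v - 1) / f z) • z) (L.smul_mem _ hz)
    rw [map_smul, smul_eq_mul, div_mul_cancel₀ _ hfz] at this
    linarith
  refine ⟨fun i => -f (Pi.single i 1), fun i => ?_, fun z hz => ?_⟩
  · linarith [hfu _ (single_mem_stdSimplex ℝ i)]
  · have hz' : f z = ∑ i, z i * f (Pi.single i 1) := by
      conv_lhs => rw [← Finset.univ_sum_single z]
      refine (map_sum f _ _).trans (Finset.sum_congr rfl fun i _ => ?_)
      rw [← smul_eq_mul, ← map_smul, ← Pi.single_smul', smul_eq_mul, mul_one]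
    calc _ = -f z := by simp [dotProduct, hz', mul_comm]
      _ = 0 := by rw [hf z hz, neg_zero]

theorem exists_pos_forall_sub_mul_lt {ι : Type*} [Finite ι] (a c : ι → ℝ) (ψ : ℝ) :
    ∃ ε > 0, ∀ i, a i < ψ → a i - ε * c i < ψ := by
  have h : ∀ᶠ ε in 𝓝 (0 : ℝ), ∀ i, a i < ψ → a i - ε * c i < ψ := by
    refine eventually_all.2 fun i => ?_
    by_cases hi : a i < ψ
    · have hcont : ContinuousAt (fun ε : ℝ => a i - ε * c i) 0 := by fun_prop
      filter_upwards [hcont.eventually_lt continuousAt_const (by simpa using hi)] with ε hε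
      exact fun _ => hε
    · exact .of_forall fun _ h => absurd h hi
  obtain ⟨ε, hε, hpos⟩ := ((h.filter_mono nhdsWithin_le_nhds).and
    (self_mem_nhdsWithin : Set.Ioi (0 : ℝ) ∈ 𝓝[>] 0)).exists
  exact ⟨ε, hpos, hε⟩

theorem lex_sort_ge_map {ι : Type*} {a b : ι → ℝ} {t : ℝ} (s : Finset ι)
    (h₁ : ∀ i ∈ s, t ≤ b i → a i ≤ b i) (h₂ : ∀ i ∈ s, t ≤ a i → t ≤ b i)
    (h₃ : ∃ i ∈ s, t ≤ b i ∧ a i < b i) :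
    List.Lex (· < ·) ((s.val.map a).sort (· ≥ ·)) ((s.val.map b).sort (· ≥ ·)) := by
  classical
  -- Either the largest entries already differ, or one index carries the largest value of both
  -- `a` and `b`: remove it and recurse.
  induction s using Finset.strongInduction with
  | H s ih =>
  have hsplit : ∀ k ∈ s, ∀ f : ι → ℝ, s.val.map f = f k ::ₘ (s.erase k).val.map f :=
    fun k hk f => by rw [Finset.erase_val, ← Multiset.map_cons, Multiset.cons_erase hk]
  have hle_top : ∀ k ∈ s, ∀ f : ι → ℝ, (∀ i ∈ s, f i ≤ f k) →
      ∀ y ∈ (s.erase k).val.map f, f k ≥ y := by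
    intro k hk f hf y hy
    obtain ⟨i, hi, rfl⟩ := Multiset.mem_map.1 hy
    exact hf i (Finset.mem_of_mem_erase hi)
  obtain ⟨i₀, hi₀, hti₀, hlt₀⟩ := h₃
  obtain ⟨j, hj, hbj⟩ := s.exists_max_image b ⟨i₀, hi₀⟩
  have hbt : t ≤ b j := hti₀.trans (hbj i₀ hi₀)
  have ha : ∀ i ∈ s, a i ≤ b j := fun i hi => by
    by_cases hti : t ≤ a i
    · exact (h₁ i hi (h₂ i hi hti)).trans (hbj i hi)
    · exact (not_le.1 hti).le.trans hbt
  by_cases htop : ∃ k ∈ s, a k = b j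
  · obtain ⟨k, hk, hak⟩ := htop
    have hbk : b k = b j := le_antisymm (hbj k hk) (hak ▸ h₁ k hk (h₂ k hk (hak ▸ hbt)))
    rw [hsplit k hk a, hsplit k hk b, Multiset.sort_cons _ _ _ (hle_top k hk a (hak ▸ ha)),
      Multiset.sort_cons _ _ _ (hle_top k hk b (hbk ▸ hbj)), hak, hbk]
    refine List.Lex.cons (ih _ (s.erase_ssubset hk) (fun i hi => h₁ i (mem_of_mem_erase hi))
      (fun i hi => h₂ i (mem_of_mem_erase hi)) ⟨i₀, mem_erase.2 ⟨?_, hi₀⟩, hti₀, hlt₀⟩)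
    rintro rfl
    exact hlt₀.ne (hak.trans hbk.symm)
  · push Not at htop
    obtain ⟨y, l, hyl⟩ := List.exists_cons_of_ne_nil
      (List.ne_nil_of_mem ((Multiset.mem_sort (· ≥ ·)).2 (Multiset.mem_map_of_mem a hi₀)))
    have hy : y ∈ s.val.map a := by
      rw [← Multiset.mem_sort (· ≥ ·), hyl]
      exact List.mem_cons_self
    obtain ⟨i, hi, rfl⟩ := Multiset.mem_map.1 hy
    rw [hyl, hsplit j hj b, Multiset.sort_cons _ _ _ (hle_top j hj b hbj)]
    exact List.Lex.rel ((ha i hi).lt_of_ne (htop i hi))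

section

variable {n : ℕ}

theorem dotProduct_indicat (d : Fin n → ℝ) (S : Finset (Fin n)) :
    d ⬝ᵥ indicat S = ∑ k ∈ S, d k := by
  simp [dotProduct, indicat, Finset.sum_ite_mem]

theorem dotProduct_sum_smul_indicat (d : Fin n → ℝ) (B : Finset (Finset (Fin n)))
    (w : Finset (Fin n) → ℝ) :
    d ⬝ᵥ ∑ S ∈ B, w S • indicat S = ∑ S ∈ B, w S * ∑ k ∈ S, d k := by
  simp [dotProduct_sum, dotProduct_smul, dotProduct_indicat]

theorem IsBalanced.sum_eq_zero_of_sum_nonneg {B : Finset (Finset (Fin n))} (hB : IsBalanced B)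
    {d : Fin n → ℝ} (hd : ∑ k, d k = 0) (hnn : ∀ S ∈ B, 0 ≤ ∑ k ∈ S, d k) :
    ∀ S ∈ B, ∑ k ∈ S, d k = 0 := by
  obtain ⟨w, hw, hsum⟩ := hB
  have h : ∑ S ∈ B, w S * ∑ k ∈ S, d k = 0 := by
    rw [← dotProduct_sum_smul_indicat, hsum]
    simpa [dotProduct] using hd
  intro S hS
  have hterm := (sum_eq_zero_iff_of_nonneg fun S hS => mul_nonneg (hw S hS).le (hnn S hS)).1 h S hS
  exact (mul_eq_zero.1 hterm).resolve_left (hw S hS).ne'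

theorem eq_of_forall_sum_eq_zero_dotProduct_eq_zero {ι : Type*} [Fintype ι] [DecidableEq ι]
    {c : ι → ℝ} (h : ∀ d : ι → ℝ, ∑ k, d k = 0 → d ⬝ᵥ c = 0) (i j : ι) : c i = c j := by
  have := h (Pi.single i 1 - Pi.single j 1) (by simp)
  rwa [sub_dotProduct, single_one_dotProduct, single_one_dotProduct, sub_eq_zero] at this

theorem isBalanced_of_forall_sum_nonneg {B : Finset (Finset (Fin n))} (hB : ∃ S ∈ B, S.Nonempty)
    (H : ∀ d : Fin n → ℝ, ∑ k, d k = 0 → (∀ S ∈ B, 0 ≤ ∑ k ∈ S, d k) →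
      ∀ S ∈ B, ∑ k ∈ S, d k = 0) :
    IsBalanced B := by
  let φ : (Fin n → ℝ) →ₗ[ℝ] Finset (Fin n) → ℝ :=
    LinearMap.pi fun S => if S ∈ B then ∑ k ∈ S, LinearMap.proj k else 0
  have hφ : ∀ d S, φ d S = if S ∈ B then ∑ k ∈ S, d k else 0 := by
    intro d S
    split_ifs <;> simp [φ, *]
  set L := (LinearMap.ker (∑ k, LinearMap.proj k)).map φ
  have hL : ∀ z ∈ L, 0 ≤ z → z = 0 := by
    rintro z ⟨d, hd, rfl⟩ hnn
    have hd' : ∑ k, d k = 0 := by simpa using hd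
    funext S
    rw [hφ, Pi.zero_apply]
    split_ifs with hS
    · exact H d hd' (fun S' hS' => by simpa [hφ, hS'] using hnn S') S hS
    · rfl
  -- `w` restricted to `B` makes `∑ w S • indicat S` orthogonal to every zero-sum vector.
  obtain ⟨w, hw, horth⟩ := L.exists_pos_dotProduct_eq_zero hL
  set c := ∑ S ∈ B, w S • indicat S
  have hc : ∀ d : Fin n → ℝ, ∑ k, d k = 0 → d ⬝ᵥ c = 0 := by
    intro d hd
    rw [dotProduct_sum_smul_indicat, ← horth (φ d) ⟨d, by simpa using hd, rfl⟩]
    simp [dotProduct, hφ]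
  obtain ⟨S₀, hS₀, k₀, hk₀⟩ := hB
  have hpos : 0 < c k₀ :=
    calc 0 < w S₀ := hw S₀
      _ = if k₀ ∈ S₀ then w S₀ else 0 := (if_pos hk₀).symm
      _ ≤ ∑ S ∈ B, if k₀ ∈ S then w S else 0 :=
        single_le_sum (f := fun S => if k₀ ∈ S then w S else 0)
          (fun S _ => by split_ifs <;> simp [(hw S).le]) hS₀
      _ = c k₀ := by simp [c, indicat]
  have hrescale : ∑ S ∈ B, (w S / c k₀) • indicat S = (c k₀)⁻¹ • c := by
    simp only [c, Finset.smul_sum, smul_smul, div_eq_inv_mul]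
  refine ⟨fun S => w S / c k₀, fun S _ => div_pos (hw S) hpos, ?_⟩
  funext k
  rw [hrescale, Pi.smul_apply, smul_eq_mul, eq_of_forall_sum_eq_zero_dotProduct_eq_zero hc k k₀,
    inv_mul_cancel₀ hpos.ne']

@[simp]
theorem mem_Dset {v : Finset (Fin n) → ℝ} {ψ : ℝ} {x : Fin n → ℝ} {S : Finset (Fin n)} :
    S ∈ Dset v ψ x ↔ S.Nonempty ∧ S ≠ univ ∧ ψ ≤ excess v S x := by
  simp [Dset]

theorem excess_add (v : Finset (Fin n) → ℝ) (S : Finset (Fin n)) (x d : Fin n → ℝ) :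
    excess v S (x + d) = excess v S x - ∑ k ∈ S, d k := by
  simp only [excess, Pi.add_apply, sum_add_distrib]
  ring

theorem sum_eq_zero_of_not_proper {d : Fin n → ℝ} (hd : ∑ k, d k = 0) {S : Finset (Fin n)}
    (hS : ¬(S.Nonempty ∧ S ≠ univ)) : ∑ k ∈ S, d k = 0 := by
  rcases S.eq_empty_or_nonempty with rfl | hne
  · exact sum_empty
  · rwa [not_and_not_right.1 hS hne]

theorem theta_eq_sort (v : Finset (Fin n) → ℝ) (x : Fin n → ℝ) :
    theta v x = (univ.val.map fun S => excess v S x).sort (· ≥ ·) := by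
  refine List.Perm.eq_of_pairwise' (List.pairwise_reverse.2 (Multiset.pairwise_sort _ _))
    (Multiset.pairwise_sort _ _) ?_
  rw [← Multiset.coe_eq_coe, Multiset.sort_eq, theta, Multiset.coe_reverse, Multiset.sort_eq]

theorem not_lexLe_of_lex {l₁ l₂ : List ℝ} (h : List.Lex (· < ·) l₂ l₁) : ¬lexLe l₁ l₂ := by
  rintro (rfl | h')
  · exact irrefl_of (List.Lex (· < ·)) _ h
  · exact irrefl_of (List.Lex (· < ·)) _ (List.lex_trans lt_trans h' h)

theorem IsPrenucleolus.isBalanced_Dset {v : Finset (Fin n) → ℝ} {x : Fin n → ℝ} {ψ : ℝ}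
    (hpn : IsPrenucleolus v x) (hD : (Dset v ψ x).Nonempty) : IsBalanced (Dset v ψ x) := by
  obtain ⟨S, hS⟩ := hD
  refine isBalanced_of_forall_sum_nonneg ⟨S, hS, (mem_Dset.1 hS).1⟩ fun d hd hnn => ?_
  by_contra! ⟨S₀, hS₀, hne⟩
  obtain ⟨ε, hε, hsmall⟩ :=
    exists_pos_forall_sub_mul_lt (excess v · x) (fun S => ∑ k ∈ S, d k) ψ
  have hexc : ∀ S, excess v S (x + ε • d) = excess v S x - ε * ∑ k ∈ S, d k := by
    simp [excess_add, mul_sum]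
  have hy : ∑ k, (x + ε • d) k = v univ := by
    simp [sum_add_distrib, ← mul_sum, hd, hpn.1]
  refine not_lexLe_of_lex ?_ (hpn.2 _ hy)
  rw [theta_eq_sort, theta_eq_sort]
  refine lex_sort_ge_map (t := ψ) univ (fun S _ hSx => ?_) (fun S _ hSy => ?_)
    ⟨S₀, mem_univ _, (mem_Dset.1 hS₀).2.2, ?_⟩
  · have hdS : 0 ≤ ∑ k ∈ S, d k := by
      by_cases hp : S.Nonempty ∧ S ≠ univ
      · exact hnn S (mem_Dset.2 ⟨hp.1, hp.2, hSx⟩)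
      · exact (sum_eq_zero_of_not_proper hd hp).ge
    rw [hexc]
    exact sub_le_self _ (mul_nonneg hε.le hdS)
  · by_contra! hlt
    exact (hsmall S hlt).not_ge (hexc S ▸ hSy)
  · rw [hexc]
    exact sub_lt_self _ (mul_pos hε ((hnn S₀ hS₀).lt_of_ne' hne))

theorem lexLe_theta_of_forall_isBalanced {v : Finset (Fin n) → ℝ} {x : Fin n → ℝ}
    (hx : ∑ k, x k = v univ) (hB : ∀ ψ, (Dset v ψ x).Nonempty → IsBalanced (Dset v ψ x))
    {y : Fin n → ℝ} (hy : ∑ k, y k = v univ) : lexLe (theta v x) (theta v y) := by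
  obtain ⟨d, rfl⟩ : ∃ d, y = x + d := ⟨y - x, by abel⟩
  have hd : ∑ k, d k = 0 := by simpa [sum_add_distrib, hx] using hy
  set P := univ.filter fun S : Finset (Fin n) => S.Nonempty ∧ S ≠ univ ∧ ∑ k ∈ S, d k ≠ 0
  have hzero : ∀ S, S ∉ P → ∑ k ∈ S, d k = 0 := by
    intro S hS
    by_cases hp : S.Nonempty ∧ S ≠ univ
    · simpa [P, hp] using hS
    · exact sum_eq_zero_of_not_proper hd hp
  rcases P.eq_empty_or_nonempty with hP | hP
  · left
    simp [theta, excess_add, hzero, hP]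
  right
  obtain ⟨S, hSP, hmax⟩ := P.exists_max_image (excess v · x) hP
  set ψ := excess v S x
  have habove : ∀ S', ψ < excess v S' x → ∑ k ∈ S', d k = 0 :=
    fun S' hlt => hzero S' fun hS' => (hmax S' hS').not_gt hlt
  have hSD : S ∈ Dset v ψ x :=
    mem_Dset.2 ⟨(mem_filter.1 hSP).2.1, (mem_filter.1 hSP).2.2.1, le_rfl⟩
  obtain ⟨S₁, hS₁, hneg⟩ : ∃ S₁ ∈ Dset v ψ x, ∑ k ∈ S₁, d k < 0 := by
    by_contra! hnn
    exact (mem_filter.1 hSP).2.2.2 ((hB ψ ⟨S, hSD⟩).sum_eq_zero_of_sum_nonneg hd hnn S hSD)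
  have hS₁ψ : excess v S₁ x = ψ :=
    le_antisymm (not_lt.1 fun h => hneg.ne (habove S₁ h)) (mem_Dset.1 hS₁).2.2
  rw [theta_eq_sort, theta_eq_sort]
  refine lex_sort_ge_map (t := excess v S₁ (x + d)) univ (fun S' _ h => ?_) (fun S' _ h => ?_)
    ⟨S₁, mem_univ _, le_rfl, ?_⟩
  · rcases le_or_gt (excess v S' x) ψ with hle | hlt
    · simp only [excess_add] at h ⊢
      linarith
    · rw [excess_add, habove S' hlt, sub_zero]
  · have hlt : ψ < excess v S' x := by
      simp only [excess_add] at h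
      linarith
    rwa [excess_add v S' x d, habove S' hlt, sub_zero]
  · rw [excess_add]
    linarith

end

theorem stmt13_general (n : ℕ) (v : Finset (Fin n) → ℝ)
    (x : Fin n → ℝ) (hx : ∑ k, x k = v Finset.univ) :
    IsPrenucleolus v x ↔
      ∀ ψ : ℝ, (Dset v ψ x).Nonempty → IsBalanced (Dset v ψ x) :=
  ⟨fun hpn _ hD => hpn.isBalanced_Dset hD,
    fun hB => ⟨hx, fun _ hy => lexLe_theta_of_forall_isBalanced hx hB hy⟩⟩

/-- Kohlberg's criterion: a pre-imputation `x` is the pre-nucleolus of `(N,v)` iff for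
every `ψ ∈ ℝ` the set `D^v(ψ,x)`, whenever nonempty, is a balanced collection. -/
theorem stmt13 (n : ℕ) (hn : 0 < n) (v : Finset (Fin n) → ℝ) (hv0 : v ∅ = 0)
    (x : Fin n → ℝ) (hx : ∑ k, x k = v Finset.univ) :
    IsPrenucleolus v x ↔
      ∀ ψ : ℝ, (Dset v ψ x).Nonempty → IsBalanced (Dset v ψ x) :=
  stmt13_general n v x hx
end
end

section
/- Let σ: X ⇉ Y be a correspondence from a nonempty convex polyhedral subset X of R^p to subsets of R^n. If σ is bounded and its graph Gr(σ) = {(x,y) : y ∈ σ(x)} is convex, then σ is lower hemicontinuous: for every x ∈ X and every open set O ⊆ R^n with σ(x) ∩ O ≠ ∅, there is a neighborhood Q of x in X such that σ(x') ∩ O ≠ ∅ for all x' ∈ Q. -/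
/-!
Polyhedra are locally conic: there is `δ > 0` such that, for every `x' ∈ X`, the ray from `x`
through `x'` stays in `X` up to distance `δ` from `x`. So a point `x'` of `X` close to `x` is the
convex combination `(1 - μ) x + μ z` with `‖z - x‖ = δ` and `μ = ‖x' - x‖ / δ`. Convexity of the
graph puts `(1 - μ) y + μ w` in `σ x'` for `y ∈ σ x` and any `w ∈ σ z`; boundedness of `σ` bounds
`‖w - y‖`, so this point is within `O(‖x' - x‖)` of `y`.
-/

open Filter Topology Metric

section

variable {E F : Type*} [NormedAddCommGroup E] [NormedSpace ℝ E]
  [NormedAddCommGroup F] [NormedSpace ℝ F]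

theorem exists_pos_forall_add_smul_sub_mem_polyhedron {ι : Type*} [Finite ι]
    (a : ι → E →L[ℝ] ℝ) (b : ι → ℝ) {x : E} (hx : ∀ i, a i x ≤ b i) :
    ∃ δ > 0, ∀ x' : E, (∀ i, a i x' ≤ b i) → ∀ t : ℝ, 0 ≤ t → ‖t • (x' - x)‖ ≤ δ →
      ∀ i, a i (x + t • (x' - x)) ≤ b i := by
  have hslack : ∀ᶠ v in 𝓝 (0 : E), ∀ i, a i x < b i → a i (x + v) < b i := by
    rw [eventually_all]
    intro i
    by_cases hi : a i x < b i
    · have hlim : Tendsto (fun v => a i (x + v)) (𝓝 0) (𝓝 (a i x)) :=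
        ((a i).continuous.comp (continuous_const.add continuous_id)).tendsto' 0 _ (by simp)
      exact (hlim.eventually (gt_mem_nhds hi)).mono fun v hv _ => hv
    · exact Eventually.of_forall fun v hi' => absurd hi' hi
  obtain ⟨δ, hδ, hball⟩ := nhds_basis_closedBall.eventually_iff.1 hslack
  refine ⟨δ, hδ, fun x' hx' t ht htδ i => ?_⟩
  rcases (hx i).lt_or_eq with hlt | heq
  · exact (hball (by simpa using htδ) i hlt).le
  · calc a i (x + t • (x' - x)) = b i + t * (a i x' - b i) := by
          simp only [map_add, map_smul, map_sub, smul_eq_mul, heq]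
      _ ≤ b i := add_le_of_nonpos_right (mul_nonpos_of_nonneg_of_nonpos ht (by linarith [hx' i]))

theorem exists_mem_norm_sub_le_of_convex_graph {X : Set E} {σ : E → Set F}
    (hconv : Convex ℝ {pp : E × F | pp.1 ∈ X ∧ pp.2 ∈ σ pp.1})
    {x : E} (hx : x ∈ X) {y : F} (hy : y ∈ σ x) {δ K : ℝ} (hδ : 0 < δ)
    (hray : ∀ x' ∈ X, ∀ t : ℝ, 0 ≤ t → ‖t • (x' - x)‖ ≤ δ → x + t • (x' - x) ∈ X)
    (hK : ∀ z ∈ X, ‖z - x‖ = δ → ∃ w ∈ σ z, ‖w - y‖ ≤ K)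
    {x' : E} (hx' : x' ∈ X) (hx'δ : ‖x' - x‖ ≤ δ) :
    ∃ y' ∈ σ x', ‖y' - y‖ ≤ K / δ * ‖x' - x‖ := by
  rcases eq_or_ne x' x with rfl | hne
  · exact ⟨y, hy, by simp⟩
  set d := ‖x' - x‖
  have hd : 0 < d := norm_pos_iff.2 (sub_ne_zero.2 hne)
  have hstep : ‖(δ / d) • (x' - x)‖ = δ := by
    rw [norm_smul, Real.norm_of_nonneg (by positivity), div_mul_cancel₀ _ hd.ne']
  set z := x + (δ / d) • (x' - x)
  have hzX : z ∈ X := hray x' hx' _ (by positivity) hstep.le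
  obtain ⟨w, hw, hwy⟩ := hK z hzX (by rw [add_sub_cancel_left, hstep])
  set μ := d / δ
  have hμ : μ ≤ 1 := (div_le_one hδ).2 hx'δ
  have hcomb := hconv (x := (x, y)) (y := (z, w)) ⟨hx, hy⟩ ⟨hzX, hw⟩
    (sub_nonneg.2 hμ) (by positivity) (sub_add_cancel 1 μ)
  have hx'_eq : (1 - μ) • x + μ • z = x' := by
    have : μ * (δ / d) = 1 := by simp only [μ]; field_simp
    simp only [z, smul_add, smul_smul, this, one_smul]
    module
  refine ⟨(1 - μ) • y + μ • w, hx'_eq ▸ hcomb.2, ?_⟩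
  calc ‖(1 - μ) • y + μ • w - y‖ = μ * ‖w - y‖ := by
        rw [show (1 - μ) • y + μ • w - y = μ • (w - y) by module, norm_smul,
          Real.norm_of_nonneg (by positivity)]
    _ ≤ μ * K := by gcongr
    _ = K / δ * d := by ring

end

theorem stmt15_general (p n : ℕ) (X : Set (Fin p → ℝ))
    (hXpoly : ∃ (k : ℕ) (a : Fin k → ((Fin p → ℝ) →ₗ[ℝ] ℝ)) (b : Fin k → ℝ),
      X = {x | ∀ i, a i x ≤ b i})
    (σ : (Fin p → ℝ) → Set (Fin n → ℝ))
    (hne : ∀ x ∈ X, (σ x).Nonempty)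
    (hbdd : ∀ B : Set (Fin p → ℝ), Bornology.IsBounded B →
      Bornology.IsBounded (⋃ x ∈ B ∩ X, σ x))
    (hconv : Convex ℝ {pp : (Fin p → ℝ) × (Fin n → ℝ) | pp.1 ∈ X ∧ pp.2 ∈ σ pp.1}) :
    ∀ x ∈ X, ∀ O : Set (Fin n → ℝ), IsOpen O → (σ x ∩ O).Nonempty →
      ∃ Q : Set (Fin p → ℝ), IsOpen Q ∧ x ∈ Q ∧ ∀ x' ∈ Q ∩ X, (σ x' ∩ O).Nonempty := by
  obtain ⟨k, a, b, rfl⟩ := hXpoly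
  rintro x hx O hO ⟨y, hyσ, hyO⟩
  obtain ⟨δ, hδ, hray⟩ := exists_pos_forall_add_smul_sub_mem_polyhedron
    (fun i => (a i).toContinuousLinearMap) b hx
  obtain ⟨M, hM⟩ := isBounded_iff_forall_norm_le.1 (hbdd (closedBall x δ) isBounded_closedBall)
  have hK (z) (hz : z ∈ {x | ∀ i, a i x ≤ b i}) (hzx : ‖z - x‖ = δ) :
      ∃ w ∈ σ z, ‖w - y‖ ≤ M + ‖y‖ := by
    obtain ⟨w, hw⟩ := hne z hz
    have hwM := hM w (Set.mem_biUnion ⟨mem_closedBall_iff_norm.2 hzx.le, hz⟩ hw)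
    exact ⟨w, hw, (norm_sub_le w y).trans (by gcongr)⟩
  obtain ⟨ε, hε, hεO⟩ := isOpen_iff.1 hO y hyO
  have hnear : ∀ᶠ x' in 𝓝 x, ‖x' - x‖ ≤ δ ∧ (M + ‖y‖) / δ * ‖x' - x‖ < ε := by
    have hlim := tendsto_norm_sub_self x
    exact (hlim.eventually (ge_mem_nhds hδ)).and
      ((tendsto_const_nhds.mul hlim).eventually (gt_mem_nhds (by simpa using hε)))
  obtain ⟨Q, hQ, hQo, hxQ⟩ := _root_.eventually_nhds_iff.1 hnear
  refine ⟨Q, hQo, hxQ, fun x' ⟨hx'Q, hx'X⟩ => ?_⟩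
  obtain ⟨y', hy'σ, hy'y⟩ := exists_mem_norm_sub_le_of_convex_graph hconv hx hyσ hδ
    hray hK hx'X (hQ x' hx'Q).1
  exact ⟨y', hy'σ, hεO (mem_ball_iff_norm.2 (hy'y.trans_lt (hQ x' hx'Q).2))⟩

/-- A bounded correspondence with convex graph on a nonempty convex polyhedral subset of
`ℝ^p` is lower hemicontinuous. -/
theorem stmt15 (p n : ℕ) (X : Set (Fin p → ℝ)) (hXne : X.Nonempty) (hXconv : Convex ℝ X)
    (hXpoly : ∃ (k : ℕ) (a : Fin k → ((Fin p → ℝ) →ₗ[ℝ] ℝ)) (b : Fin k → ℝ),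
      X = {x | ∀ i, a i x ≤ b i})
    (σ : (Fin p → ℝ) → Set (Fin n → ℝ))
    (hne : ∀ x ∈ X, (σ x).Nonempty)
    (hbdd : ∀ B : Set (Fin p → ℝ), Bornology.IsBounded B →
      Bornology.IsBounded (⋃ x ∈ B ∩ X, σ x))
    (hconv : Convex ℝ {pp : (Fin p → ℝ) × (Fin n → ℝ) | pp.1 ∈ X ∧ pp.2 ∈ σ pp.1}) :
    ∀ x ∈ X, ∀ O : Set (Fin n → ℝ), IsOpen O → (σ x ∩ O).Nonempty →
      ∃ Q : Set (Fin p → ℝ), IsOpen Q ∧ x ∈ Q ∧ ∀ x' ∈ Q ∩ X, (σ x' ∩ O).Nonempty :=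
  stmt15_general p n X hXpoly σ hne hbdd hconv
end
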